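/- arXiv:1805.12228 — 2 statements merged into one kernel-verified Lean document; each statement's English description precedes it below -/
import Mathlib

section
/- Let g be a constant symmetric invertible n×n real matrix (a flat pseudo-Euclidean metric in Cartesian coordinates), and let L be a smooth symmetric 2-tensor field on ℝⁿ satisfying ∂_k L_ij = α_i g_jk + α_j g_ik for some smooth 1-form α. Define K_ij = (tr L) g_ij − L_ij, where tr L = g^{ab} L_ab with g^{ab} the inverse metric. Then K satisfies the Killing tensor equation: ∂_i K_jk + ∂_j K_ki + ∂_k K_ij = 0 at every point. -/
open Finset in
/-- if `L` is a concircular tensor on flat pseudo-Euclidean space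
(`∂_k L_ij = α_i g_jk + α_j g_ik`), then `K = (tr L) g − L` is a Killing tensor:
the cyclic sum of partial derivatives vanishes. -/
theorem killing_bertrand_darboux_tensor
    (n : ℕ) (g : Matrix (Fin n) (Fin n) ℝ) (hg : g.IsSymm) (hginv : IsUnit g.det)
    (L : (Fin n → ℝ) → Fin n → Fin n → ℝ)
    (hLsmooth : ∀ i j, ContDiff ℝ (⊤ : ℕ∞) (fun x => L x i j))
    (hLsymm : ∀ x i j, L x i j = L x j i)
    (α : (Fin n → ℝ) → Fin n → ℝ)
    (hCT : ∀ (x : Fin n → ℝ) (i j k : Fin n),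
      fderiv ℝ (fun y => L y i j) x (Pi.single k 1) = α x i * g j k + α x j * g i k)
    (K : (Fin n → ℝ) → Fin n → Fin n → ℝ)
    (hK : ∀ x i j,
      K x i j = (∑ a : Fin n, ∑ b : Fin n, g⁻¹ a b * L x a b) * g i j - L x i j) :
    ∀ (x : Fin n → ℝ) (i j k : Fin n),
      fderiv ℝ (fun y => K y j k) x (Pi.single i 1) +
      fderiv ℝ (fun y => K y k i) x (Pi.single j 1) +
      fderiv ℝ (fun y => K y i j) x (Pi.single k 1) = 0 := by
  -- symmetry of the inverse metric
  have hgisymm : (g⁻¹ : Matrix (Fin n) (Fin n) ℝ).IsSymm := by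
    unfold Matrix.IsSymm
    rw [Matrix.transpose_nonsing_inv, hg.eq]
  -- g⁻¹ * g = 1, entrywise
  have hinv : ∀ a i : Fin n, (∑ b : Fin n, g⁻¹ a b * g b i) = if a = i then 1 else 0 := by
    intro a i
    have h1 : (g⁻¹ * g) a i = ∑ b : Fin n, g⁻¹ a b * g b i := Matrix.mul_apply
    rw [Matrix.nonsing_inv_mul g hginv] at h1
    rw [← h1, Matrix.one_apply]
  have hder : ∀ (a b : Fin n) (x : Fin n → ℝ),
      HasFDerivAt (fun y => L y a b) (fderiv ℝ (fun y => L y a b) x) x :=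
    fun a b x => (((hLsmooth a b).differentiable (by simp)) x).hasFDerivAt
  -- the key formula for the derivative of K
  have key : ∀ (x : Fin n → ℝ) (i j k : Fin n),
      fderiv ℝ (fun y => K y j k) x (Pi.single i 1)
        = 2 * α x i * g j k - (α x j * g k i + α x k * g j i) := by
    intro x i j k
    have hfun : (fun y => K y j k)
        = fun y => (∑ a : Fin n, ∑ b : Fin n, g⁻¹ a b * L y a b) * g j k - L y j k :=
      funext fun y => hK y j k
    have htr : HasFDerivAt (fun y => ∑ a : Fin n, ∑ b : Fin n, g⁻¹ a b * L y a b)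
        (∑ a : Fin n, ∑ b : Fin n, g⁻¹ a b • fderiv ℝ (fun y => L y a b) x) x := by
      apply HasFDerivAt.fun_sum
      intro a _
      apply HasFDerivAt.fun_sum
      intro b _
      exact (hder a b x).const_mul _
    have hKd : HasFDerivAt (fun y => K y j k)
        ((g j k) • (∑ a : Fin n, ∑ b : Fin n, g⁻¹ a b • fderiv ℝ (fun y => L y a b) x)
          - fderiv ℝ (fun y => L y j k) x) x := by
      rw [hfun]
      exact (htr.mul_const (g j k)).sub (hder j k x)
    rw [hKd.fderiv]
    simp only [ContinuousLinearMap.sub_apply, ContinuousLinearMap.smul_apply,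
      ContinuousLinearMap.sum_apply, hCT, smul_eq_mul]
    have hsum : (∑ a : Fin n, ∑ b : Fin n, g⁻¹ a b * (α x a * g b i + α x b * g a i))
        = 2 * α x i := by
      have h1 : (∑ a : Fin n, ∑ b : Fin n, g⁻¹ a b * (α x a * g b i)) = α x i := by
        have : ∀ a : Fin n, (∑ b : Fin n, g⁻¹ a b * (α x a * g b i))
            = α x a * (if a = i then 1 else 0) := by
          intro a
          rw [← hinv a i, Finset.mul_sum]
          congr 1; funext b; ring
        simp only [this, mul_ite, mul_one, mul_zero]
        simp
      have h2 : (∑ a : Fin n, ∑ b : Fin n, g⁻¹ a b * (α x b * g a i)) = α x i := by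
        rw [Finset.sum_comm]
        have : ∀ b : Fin n, (∑ a : Fin n, g⁻¹ a b * (α x b * g a i))
            = α x b * (if b = i then 1 else 0) := by
          intro b
          have : (∑ a : Fin n, g⁻¹ b a * g a i) = if b = i then 1 else 0 := hinv b i
          rw [← this, Finset.mul_sum]
          apply Finset.sum_congr rfl
          intro a _
          rw [hgisymm.apply b a, hg.apply i a]
          ring
        simp only [this, mul_ite, mul_one, mul_zero]
        simp
      calc (∑ a : Fin n, ∑ b : Fin n, g⁻¹ a b * (α x a * g b i + α x b * g a i))
          = (∑ a : Fin n, ∑ b : Fin n, (g⁻¹ a b * (α x a * g b i) + g⁻¹ a b * (α x b * g a i))) := by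
            apply Finset.sum_congr rfl; intro a _; apply Finset.sum_congr rfl; intro b _; ring
        _ = (∑ a : Fin n, ∑ b : Fin n, g⁻¹ a b * (α x a * g b i))
            + (∑ a : Fin n, ∑ b : Fin n, g⁻¹ a b * (α x b * g a i)) := by
            rw [← Finset.sum_add_distrib]
            apply Finset.sum_congr rfl; intro a _; rw [← Finset.sum_add_distrib]
        _ = 2 * α x i := by rw [h1, h2]; ring
    rw [hsum]
    ring
  intro x i j k
  rw [key, key, key]
  have e1 : g k i = g i k := (hg.apply k i).symm
  have e2 : g j i = g i j := (hg.apply j i).symm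
  have e3 : g k j = g j k := (hg.apply k j).symm
  rw [e1, e2, e3]
  ring
end

section
/- On the region u > v > w > 0, define F(u, v, w) = (t, x, y) by x + t = (1/8)(u² + v² + w²) − (1/4)(uv + uw + vw), x − t = u + v + w, and y = √(uvw). Then the pullback under F of the Minkowski metric −dt² + dx² + dy² equals ((u−v)(u−w)/(4u)) du² − ((u−v)(v−w)/(4v)) dv² + ((v−w)(u−w)/(4w)) dw². -/
open Real

/-- The partial derivative of `f : ℝ³ → ℝ` in the `a`-th coordinate direction at `p`. -/
noncomputable def pd (f : (Fin 3 → ℝ) → ℝ) (p : Fin 3 → ℝ) (a : Fin 3) : ℝ :=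
  fderiv ℝ f p (Pi.single a 1)

noncomputable def prj (k : Fin 3) : (Fin 3 → ℝ) →L[ℝ] ℝ :=
  ContinuousLinearMap.proj k

lemma hprj (k : Fin 3) (p : Fin 3 → ℝ) : HasFDerivAt (fun q : Fin 3 → ℝ => q k) (prj k) p :=
  (prj k).hasFDerivAt

lemma prj_single (k a : Fin 3) : prj k (Pi.single a (1:ℝ)) = if k = a then 1 else 0 := by
  simp [prj, Pi.single_apply]

lemma fin3_mk_two (h : 2 < 3) : (⟨2, h⟩ : Fin 3) = 2 := rfl

set_option maxHeartbeats 2000000 in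
/-- the null paraboloidal web I.  On the region `u > v > w > 0`, with
`x + t = (1/8)(u² + v² + w²) − (1/4)(uv + uw + vw)`, `x − t = u + v + w`,
`y = √(uvw)`, the pullback of `−dt² + dx² + dy²` equals
`((u−v)(u−w)/(4u)) du² − ((u−v)(v−w)/(4v)) dv² + ((v−w)(u−w)/(4w)) dw²`. -/
theorem null_paraboloidal_web_I_pullback_metric
    (t x y : (Fin 3 → ℝ) → ℝ)
    (hxt : ∀ p, x p + t p = (1/8) * (p 0 ^ 2 + p 1 ^ 2 + p 2 ^ 2)
      - (1/4) * (p 0 * p 1 + p 0 * p 2 + p 1 * p 2))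
    (hxt' : ∀ p, x p - t p = p 0 + p 1 + p 2)
    (hy : ∀ p, y p = Real.sqrt (p 0 * p 1 * p 2)) :
    ∀ p : Fin 3 → ℝ, 0 < p 2 → p 2 < p 1 → p 1 < p 0 → ∀ i j : Fin 3,
      -(pd t p i * pd t p j) + pd x p i * pd x p j + pd y p i * pd y p j =
        Matrix.diagonal ![(p 0 - p 1) * (p 0 - p 2) / (4 * p 0),
          -((p 0 - p 1) * (p 1 - p 2) / (4 * p 1)),
          (p 1 - p 2) * (p 0 - p 2) / (4 * p 2)] i j := by
  intro p hw hwv hvu i j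
  have hv : 0 < p 1 := hw.trans hwv
  have hu : 0 < p 0 := hv.trans hvu
  have hprod : 0 < p 0 * p 1 * p 2 := by positivity
  have hs0 : 0 < Real.sqrt (p 0 * p 1 * p 2) := Real.sqrt_pos.mpr hprod
  have hs2 : Real.sqrt (p 0 * p 1 * p 2) * Real.sqrt (p 0 * p 1 * p 2) = p 0 * p 1 * p 2 :=
    Real.mul_self_sqrt hprod.le
  have ht : t = fun q => (1/2) * ((1/8) * (q 0 * q 0 + q 1 * q 1 + q 2 * q 2)
      - (1/4) * (q 0 * q 1 + q 0 * q 2 + q 1 * q 2) - (q 0 + q 1 + q 2)) := by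
    funext q; have h1 := hxt q; have h2 := hxt' q
    rw [pow_two, pow_two, pow_two] at h1; linarith
  have hx : x = fun q => (1/2) * ((1/8) * (q 0 * q 0 + q 1 * q 1 + q 2 * q 2)
      - (1/4) * (q 0 * q 1 + q 0 * q 2 + q 1 * q 2) + (q 0 + q 1 + q 2)) := by
    funext q; have h1 := hxt q; have h2 := hxt' q
    rw [pow_two, pow_two, pow_two] at h1; linarith
  have hy' : y = fun q => Real.sqrt (q 0 * q 1 * q 2) := funext hy
  have hA := ((((hprj 0 p).mul (hprj 0 p)).add ((hprj 1 p).mul (hprj 1 p))).add ((hprj 2 p).mul (hprj 2 p))).const_mul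
    ((1:ℝ)/8)
  have hB := ((((hprj 0 p).mul (hprj 1 p)).add ((hprj 0 p).mul (hprj 2 p))).add
    ((hprj 1 p).mul (hprj 2 p))).const_mul ((1:ℝ)/4)
  have hC := ((hprj 0 p).add (hprj 1 p)).add (hprj 2 p)
  have pdt : ∀ a, pd t p a = (2 * p a - (p 0 + p 1 + p 2) - 4) / 8 := by
    intro a
    have hT : HasFDerivAt (fun q : Fin 3 → ℝ => (1/2) * ((1/8) * (q 0 * q 0 + q 1 * q 1 + q 2 * q 2)
        - (1/4) * (q 0 * q 1 + q 0 * q 2 + q 1 * q 2) - (q 0 + q 1 + q 2))) _ p :=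
      ((hA.sub hB).sub hC).const_mul ((1:ℝ)/2)
    rw [pd, ht, hT.fderiv]
    fin_cases a <;> simp [prj_single] <;> ring
  have pdx : ∀ a, pd x p a = (2 * p a - (p 0 + p 1 + p 2) + 4) / 8 := by
    intro a
    have hX : HasFDerivAt (fun q : Fin 3 → ℝ => (1/2) * ((1/8) * (q 0 * q 0 + q 1 * q 1 + q 2 * q 2)
        - (1/4) * (q 0 * q 1 + q 0 * q 2 + q 1 * q 2) + (q 0 + q 1 + q 2))) _ p :=
      ((hA.sub hB).add hC).const_mul ((1:ℝ)/2)
    rw [pd, hx, hX.fderiv]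
    fin_cases a <;> simp [prj_single] <;> ring
  have pdy : ∀ a, pd y p a = Real.sqrt (p 0 * p 1 * p 2) / (2 * p a) := by
    intro a
    have hG := ((hprj 0 p).mul (hprj 1 p)).mul (hprj 2 p)
    have hY : HasFDerivAt (fun q : Fin 3 → ℝ => Real.sqrt (q 0 * q 1 * q 2)) _ p :=
      (Real.hasDerivAt_sqrt hprod.ne').comp_hasFDerivAt p hG
    rw [pd, hy', hY.fderiv]
    have aux : ∀ S X A : ℝ, 0 < S → 0 < A → X * A = S * S → S⁻¹ * 2⁻¹ * X = S/(2*A) := by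
      intro S X A hS hA h
      rw [show S⁻¹ * 2⁻¹ * X = X / (2 * S) by ring,
        div_eq_div_iff (by positivity) (by positivity)]
      nlinarith
    fin_cases a <;> simp [prj_single] <;>
      [ (exact aux _ _ _ hs0 hu (by nlinarith [hs2]));
        (exact aux _ _ _ hs0 hv (by nlinarith [hs2]));
        (exact aux _ _ _ hs0 hw (by nlinarith [hs2]))]
  have pdyy : ∀ a b, pd y p a * pd y p b = p 0 * p 1 * p 2 / (4 * (p a * p b)) := by
    intro a b
    have ha : p a ≠ 0 := by fin_cases a <;> positivity
    have hb : p b ≠ 0 := by fin_cases b <;> positivity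
    rw [pdy a, pdy b, div_mul_div_comm, hs2]
    ring_nf
  rw [pdt, pdt, pdx, pdx, pdyy]
  clear pdt pdx pdyy ht hx hy' hA hB hC hxt hxt' hy hs2 hs0
  fin_cases i <;> fin_cases j <;>
    simp [fin3_mk_two, Matrix.diagonal_apply, Fin.ext_iff] <;> field_simp <;> ring
end
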